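/- Let μ be a probability measure on ℝ^d, fix x, z ∈ ℝ^d, and let b be uniformly distributed on [0, 2π] independently of ω ~ μ. Then E_{ω, b}[ 2 cos(⟨ω, x⟩ + b) · cos(⟨ω, z⟩ + b) ] = E_{ω ~ μ}[ cos(⟨ω, x − z⟩) ]. Formally: ∫_{ℝ^d} ∫_{0}^{2π} 2 cos(⟨ω, x⟩ + b) cos(⟨ω, z⟩ + b) · (1/(2π)) db dμ(ω) = ∫_{ℝ^d} cos(⟨ω, x − z⟩) dμ(ω). -/

import Mathlib

open MeasureTheory Real
open scoped InnerProductSpace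

lemma rff_inner_integral (a c : ℝ) :
    ∫ b in (0:ℝ)..(2 * π),
        2 * Real.cos (a + b) * Real.cos (c + b) * (1 / (2 * π))
      = Real.cos (a - c) := by
  have hπ : (2 * π) ≠ 0 := by positivity
  have hfun : ∀ b : ℝ, 2 * Real.cos (a + b) * Real.cos (c + b) * (1 / (2 * π))
      = (Real.cos (a - c) + Real.cos ((a + c) + 2 * b)) * (1 / (2 * π)) := by
    intro b
    have h1 : a - c = (a + b) - (c + b) := by ring
    rw [h1, show (a + c) + 2 * b = (a + b) + (c + b) by ring,
      Real.cos_sub, Real.cos_add (a + b) (c + b)]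
    ring
  simp only [hfun]
  have h2 : ∫ b in (0:ℝ)..(2 * π), Real.cos ((a + c) + 2 * b) = 0 := by
    have := intervalIntegral.integral_comp_mul_add (a := (0:ℝ)) (b := 2 * π)
      (c := 2) (d := a + c) (f := Real.cos) two_ne_zero
    simp only [show ∀ b : ℝ, (a + c) + 2 * b = 2 * b + (a + c) from fun b => by ring]
    rw [this, integral_cos]
    have : Real.sin (2 * (2 * π) + (a + c)) = Real.sin (2 * 0 + (a + c)) := by
      rw [show 2 * (2 * π) + (a + c) = (a + c) + 2 * (2 * π) by ring,
        show (2:ℝ) * 0 + (a + c) = a + c by ring]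
      exact_mod_cast Real.sin_add_int_mul_two_pi (a + c) 2
    rw [this]
    simp
  have hint1 : IntervalIntegrable (fun _ : ℝ => Real.cos (a - c)) volume 0 (2 * π) :=
    intervalIntegrable_const
  have hint2 : IntervalIntegrable (fun b : ℝ => Real.cos ((a + c) + 2 * b)) volume 0 (2 * π) :=
    (Real.continuous_cos.comp (by continuity)).intervalIntegrable _ _
  rw [show (fun b : ℝ => (Real.cos (a - c) + Real.cos ((a + c) + 2 * b)) * (1 / (2 * π)))
      = fun b : ℝ => (Real.cos (a - c) + Real.cos ((a + c) + 2 * b)) * (1 / (2 * π)) from rfl]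
  rw [intervalIntegral.integral_mul_const, intervalIntegral.integral_add hint1 hint2, h2,
    intervalIntegral.integral_const]
  field_simp
  simp

/-- Unbiasedness of the random Fourier feature construction: with `ω ~ μ` and `b`
uniform on `[0, 2π]` independent of `ω`,
`E[2 cos (⟪ω, x⟫ + b) cos (⟪ω, z⟫ + b)] = E[cos ⟪ω, x - z⟫]`. -/
theorem random_feature_unbiased (d : ℕ)
    (μ : Measure (EuclideanSpace ℝ (Fin d))) [IsProbabilityMeasure μ]
    (x z : EuclideanSpace ℝ (Fin d)) :
    ∫ ω, (∫ b in (0:ℝ)..(2 * π),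
          2 * Real.cos (⟪ω, x⟫_ℝ + b) * Real.cos (⟪ω, z⟫_ℝ + b) * (1 / (2 * π))) ∂μ
      = ∫ ω, Real.cos ⟪ω, x - z⟫_ℝ ∂μ := by
  refine integral_congr_ae (Filter.Eventually.of_forall fun ω => ?_)
  simp only [inner_sub_right]
  exact rff_inner_integral _ _
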